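/- arXiv:2204.02644 — 6 statements merged into one kernel-verified Lean document; each statement's English description precedes it below -/
import Mathlib

section
/- Let α > 1 be a real number and let m ≥ 1 be an integer. The following are equivalent: (i) α has the Pisot property, i.e. there exists a nonzero real number ζ such that ‖ζ·α^k‖ → 0 as k → ∞; (ii) there exists an α-admissible sequence (n_k) whose phase sequence σ_k := n_{k+1} − α·n_k converges; (iii) there exists an α-admissible sequence (n_k) whose phase sequence σ_k := n_{k+1} − α·n_k converges to a cycle of exact period m, i.e. there exist real numbers L₀, …, L_{m−1} such that for each 0 ≤ j < m the subsequence (σ_{km+j})_{k≥0} converges to L_j, and no proper divisor d of m satisfies L_{(j+d) mod m} = L_j for all j. -/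
open Filter Topology

/-- The phase sequence of a sequence of positive integers relative to `α` (with `β = 0`):
`σ_k = n_{k+1} - α n_k`. -/
noncomputable def phaseSeq (α : ℝ) (n : ℕ → ℕ) (k : ℕ) : ℝ :=
  (n (k + 1) : ℝ) - α * (n k : ℝ)

/-- An `α`-admissible sequence: strictly increasing positive integers whose phase sequence
`σ_k = n_{k+1} - α n_k` is bounded. -/
def AlphaAdmissible (α : ℝ) (n : ℕ → ℕ) : Prop :=
  StrictMono n ∧ (∀ k, 0 < n k) ∧ ∃ C : ℝ, ∀ k, |phaseSeq α n k| ≤ C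

/-- `α` has the Pisot property: there is a nonzero real `ζ` with `‖ζ α^k‖ → 0`, where
`‖·‖` is the distance to the nearest integer. -/
def HasPisotProperty (α : ℝ) : Prop :=
  ∃ ζ : ℝ, ζ ≠ 0 ∧
    Tendsto (fun k : ℕ => |ζ * α ^ k - (round (ζ * α ^ k) : ℝ)|) atTop (𝓝 0)

/-!
If the phase `σ` of an `α`-admissible sequence `n` is bounded, the discounted tail
`g k = ∑ i, σ (k + i) / α ^ (i + 1)` satisfies `α g k = σ k + g (k + 1)`, hence
`ζ α ^ k = n k + g k` with `ζ = n 0 + g 0`. If moreover `σ (k + m) - σ k → 0`, which holds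
when `σ` converges or converges to an `m`-cycle, then `g (k + m) - g k → 0`, so
`ζ (α ^ m - 1) α ^ k` is asymptotically the integer `n (k + m) - n k`; and `ζ ≠ 0` because
these integers are at least `1`.

Conversely, if `ζ > 0` and `ζ α ^ k - round (ζ α ^ k) = δ k → 0`, then from some index on the
integers `round (ζ α ^ k)` form an admissible sequence with phase `α δ k - δ (k + 1) → 0` and gaps
at least `2`. Adding the indicator of the multiples of `m` keeps it admissible and adds to the
phase an `m`-periodic sequence whose exact period is `m`.
-/

noncomputable def discountedTail (r : ℝ) (σ : ℕ → ℝ) (k : ℕ) : ℝ :=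
  ∑' i, σ (k + i) * r ^ (i + 1)

section DiscountedTail

variable {r C : ℝ} {σ : ℕ → ℝ}

lemma summable_discountedTail (hr : |r| < 1) (hσ : ∀ k, |σ k| ≤ C) (k : ℕ) :
    Summable fun i => σ (k + i) * r ^ (i + 1) := by
  refine Summable.of_norm_bounded (g := fun i => C * |r| ^ (i + 1)) ?_ fun i => ?_
  · simpa [pow_succ', mul_assoc] using
      (summable_geometric_of_lt_one (abs_nonneg r) hr).mul_left (C * |r|)
  · rw [norm_mul, norm_pow, Real.norm_eq_abs, Real.norm_eq_abs]
    exact mul_le_mul_of_nonneg_right (hσ _) (by positivity)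

lemma discountedTail_eq (hr : |r| < 1) (hσ : ∀ k, |σ k| ≤ C) (k : ℕ) :
    discountedTail r σ k = r * (σ k + discountedTail r σ (k + 1)) := by
  rw [discountedTail, (summable_discountedTail hr hσ k).tsum_eq_zero_add, discountedTail,
    mul_add, ← tsum_mul_left]
  congr 1
  · simp [mul_comm]
  · congr 1 with i
    rw [show k + (i + 1) = k + 1 + i by omega, pow_succ]
    ring

lemma discountedTail_add_sub (hr : |r| < 1) (hσ : ∀ k, |σ k| ≤ C) (k m : ℕ) :
    discountedTail r σ (k + m) - discountedTail r σ k =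
      discountedTail r (fun j => σ (j + m) - σ j) k := by
  rw [discountedTail, discountedTail, discountedTail,
    ← (summable_discountedTail hr hσ _).tsum_sub (summable_discountedTail hr hσ _)]
  congr 1 with i
  rw [add_right_comm, sub_mul]

lemma tendsto_discountedTail (hr : |r| < 1) (hσ : Tendsto σ atTop (𝓝 0)) :
    Tendsto (discountedTail r σ) atTop (𝓝 0) := by
  obtain ⟨C, hC⟩ := isBounded_iff_forall_norm_le.1 (Metric.isBounded_range_of_tendsto σ hσ)
  have hbound : Summable fun i => ‖C * r ^ (i + 1)‖ :=
    (summable_discountedTail (σ := fun _ => C) hr (fun _ => le_rfl) 0).norm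
  have h := tendsto_tsum_of_dominated_convergence (f := fun k i => σ (k + i) * r ^ (i + 1)) (g := fun _ => (0 : ℝ)) hbound
    (fun i => by simpa using ((tendsto_add_atTop_iff_nat i).2 hσ).mul_const (r ^ (i + 1)))
    (Eventually.of_forall fun k i => by
      rw [norm_mul, norm_mul]
      gcongr
      exact (hC _ (Set.mem_range_self _)).trans (Real.le_norm_self C))
  rwa [tsum_zero] at h

end DiscountedTail

lemma hasPisotProperty_of_tendsto_sub_intCast {α ζ : ℝ} (hζ : ζ ≠ 0) (z : ℕ → ℤ)
    (h : Tendsto (fun k => ζ * α ^ k - z k) atTop (𝓝 0)) : HasPisotProperty α :=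
  ⟨ζ, hζ, squeeze_zero (fun _ => abs_nonneg _) (fun k => round_le _ (z k)) (by simpa using h.abs)⟩

lemma AlphaAdmissible.hasPisotProperty_of_tendsto_phaseSeq_sub {α : ℝ} {n : ℕ → ℕ} {m : ℕ}
    (hn : AlphaAdmissible α n) (hα : 1 < α) (hm : 0 < m)
    (h : Tendsto (fun k => phaseSeq α n (k + m) - phaseSeq α n k) atTop (𝓝 0)) :
    HasPisotProperty α := by
  obtain ⟨hmono, -, C, hC⟩ := hn
  have hr : |α⁻¹| < 1 := by
    rw [abs_inv, abs_of_pos (by linarith)]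
    exact inv_lt_one_of_one_lt₀ hα
  set g := discountedTail α⁻¹ (phaseSeq α n)
  have hpow : ∀ k, (n 0 + g 0) * α ^ k = n k + g k := by
    intro k
    induction k with
    | zero => simp
    | succ k ih =>
      have hrec : g k = α⁻¹ * (phaseSeq α n k + g (k + 1)) := discountedTail_eq hr hC k
      rw [pow_succ, ← mul_assoc, ih, hrec, phaseSeq]
      field_simp
      ring
  have hg : Tendsto (fun k => g (k + m) - g k) atTop (𝓝 0) := by
    simpa only [g, discountedTail_add_sub hr hC] using tendsto_discountedTail hr h
  set ζ := (n 0 + g 0) * (α ^ m - 1)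
  have hζ : ∀ k, ζ * α ^ k - ((n (k + m) - n k : ℤ) : ℝ) = g (k + m) - g k := by
    intro k
    push_cast
    linear_combination hpow (k + m) - hpow k + (n 0 + g 0) * α ^ k * (pow_add α k m).symm
  refine hasPisotProperty_of_tendsto_sub_intCast (fun hζ0 => ?_) _
    (hg.congr fun k => (hζ k).symm)
  have hgap : ∀ k, (1 : ℝ) ≤ n (k + m) - n k := fun k => by
    have : n k + 1 ≤ n (k + m) := hmono (by omega)
    rw [le_sub_iff_add_le']
    exact_mod_cast this
  have hlim : Tendsto (fun k => ((n (k + m) : ℝ) - n k)) atTop (𝓝 0) := by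
    simpa [← hζ, hζ0] using hg.neg
  linarith [ge_of_tendsto' hlim hgap]

lemma tendsto_of_forall_tendsto_mul_add {X : Type*} {f : ℕ → X} {l : Filter X} {m : ℕ}
    (hm : 0 < m) (h : ∀ j < m, Tendsto (fun q => f (q * m + j)) atTop l) :
    Tendsto f atTop l := by
  intro s hs
  obtain ⟨N, hN⟩ := eventually_atTop.1 <| eventually_all.2 fun j : Fin m => h j j.2 hs
  refine mem_atTop_sets.2 ⟨N * m, fun k hk => ?_⟩
  have := hN (k / m) ((Nat.le_div_iff_mul_le hm).2 hk) ⟨k % m, Nat.mod_lt k hm⟩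
  simpa only [Set.mem_preimage, Nat.div_add_mod'] using this

lemma tendsto_add_sub_of_tendsto_mul_add {G : Type*} [AddGroup G] [TopologicalSpace G]
    [IsTopologicalAddGroup G] {f : ℕ → G} {L : ℕ → G} {m : ℕ} (hm : 0 < m)
    (h : ∀ j < m, Tendsto (fun q => f (q * m + j)) atTop (𝓝 (L j))) :
    Tendsto (fun k => f (k + m) - f k) atTop (𝓝 0) :=
  tendsto_of_forall_tendsto_mul_add hm fun j hj => by
    have := ((tendsto_add_atTop_iff_nat 1).2 (h j hj)).sub (h j hj)
    rw [sub_self] at this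
    refine this.congr fun q => ?_
    rw [add_mul, one_mul, add_right_comm]

lemma abs_neg_sub_round (x : ℝ) : |-x - round (-x)| = |x - round x| := by
  have h := norm_neg (x : AddCircle (1 : ℝ))
  rw [← AddCircle.coe_neg, AddCircle.norm_eq, AddCircle.norm_eq] at h
  simpa using h

lemma HasPisotProperty.exists_pos {α : ℝ} (h : HasPisotProperty α) :
    ∃ ζ, 0 < ζ ∧ Tendsto (fun k : ℕ => ζ * α ^ k - round (ζ * α ^ k)) atTop (𝓝 0) := by
  obtain ⟨ζ, hζ, hlim⟩ := h
  rcases hζ.lt_or_gt with hneg | hpos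
  · refine ⟨-ζ, neg_pos.2 hneg, (tendsto_zero_iff_abs_tendsto_zero _).2 ?_⟩
    simpa only [Function.comp_def, neg_mul, abs_neg_sub_round]
  · exact ⟨ζ, hpos, (tendsto_zero_iff_abs_tendsto_zero _).2 hlim⟩

lemma exists_alphaAdmissible_of_eventually_gap {α : ℝ} {N : ℕ → ℕ}
    (hphase : Tendsto (phaseSeq α N) atTop (𝓝 0))
    (hev : ∀ᶠ j in atTop, 0 < N j ∧ N j + 1 < N (j + 1)) :
    ∃ n : ℕ → ℕ, AlphaAdmissible α n ∧ (∀ k, n k + 1 < n (k + 1)) ∧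
      Tendsto (phaseSeq α n) atTop (𝓝 0) := by
  obtain ⟨K, hK⟩ := eventually_atTop.1 hev
  have hgap : ∀ k, N (K + k) + 1 < N (K + (k + 1)) := fun k => (hK (K + k) (by omega)).2
  obtain ⟨C, hC⟩ := isBounded_iff_forall_norm_le.1 (Metric.isBounded_range_of_tendsto _ hphase)
  exact ⟨fun k => N (K + k), ⟨strictMono_nat_of_lt_succ fun k => by linarith [hgap k],
    fun k => (hK (K + k) (by omega)).1, C, fun k => hC _ (Set.mem_range_self (K + k))⟩, hgap,
    hphase.comp (tendsto_atTop_mono (Nat.le_add_left · K) tendsto_id)⟩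

lemma HasPisotProperty.exists_alphaAdmissible_phaseSeq_tendsto_zero {α : ℝ}
    (hP : HasPisotProperty α) (hα : 1 < α) :
    ∃ n : ℕ → ℕ, AlphaAdmissible α n ∧ (∀ k, n k + 1 < n (k + 1)) ∧
      Tendsto (phaseSeq α n) atTop (𝓝 0) := by
  obtain ⟨ζ, hζ, hδ⟩ := hP.exists_pos
  set δ : ℕ → ℝ := fun j => ζ * α ^ j - round (ζ * α ^ j)
  set N : ℕ → ℕ := fun j => (round (ζ * α ^ j)).toNat
  have hN : ∀ j, (N j : ℝ) = ζ * α ^ j - δ j := fun j => by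
    have : 0 ≤ round (ζ * α ^ j) := by
      rw [round_eq]
      exact Int.floor_nonneg.2 (by positivity)
    simp only [N, δ, sub_sub_cancel]
    exact_mod_cast Int.toNat_of_nonneg this
  have hphase : Tendsto (phaseSeq α N) atTop (𝓝 0) := by
    have h := (hδ.const_mul α).sub ((tendsto_add_atTop_iff_nat 1).2 hδ)
    rw [mul_zero, sub_zero] at h
    refine h.congr fun j => ?_
    rw [phaseSeq, hN, hN, pow_succ]
    ring
  have hgrow : Tendsto (fun j => ζ * α ^ j) atTop atTop :=
    (tendsto_pow_atTop_atTop_of_one_lt hα).const_mul_atTop hζ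
  have hNtop : Tendsto (fun j => (N j : ℝ)) atTop atTop := by
    refine (hgrow.atTop_add hδ.neg).congr fun j => ?_
    rw [hN, sub_eq_add_neg]
  have hgaptop : Tendsto (fun j => (N (j + 1) : ℝ) - N j) atTop atTop := by
    have h := (hgrow.atTop_mul_const (sub_pos.2 hα)).atTop_add
      (hδ.sub ((tendsto_add_atTop_iff_nat 1).2 hδ))
    refine h.congr fun j => ?_
    rw [hN, hN, pow_succ]
    ring
  refine exists_alphaAdmissible_of_eventually_gap hphase ?_
  filter_upwards [hNtop.eventually_ge_atTop 1, hgaptop.eventually_ge_atTop 2] with j h1 h2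
  constructor
  · exact_mod_cast (by linarith : (0 : ℝ) < N j)
  · exact_mod_cast (by linarith : (N j : ℝ) + 1 < N (j + 1))

lemma phaseSeq_add (α : ℝ) (a b : ℕ → ℕ) (k : ℕ) :
    phaseSeq α (a + b) k = phaseSeq α a k + phaseSeq α b k := by
  simp only [phaseSeq, Pi.add_apply, Nat.cast_add]
  ring

lemma AlphaAdmissible.add {α : ℝ} {r e : ℕ → ℕ} (hr : AlphaAdmissible α r) (hα : 0 ≤ α)
    (hgap : ∀ k, r k + 1 < r (k + 1)) (he : ∀ k, e k ≤ 1) : AlphaAdmissible α (r + e) := by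
  obtain ⟨-, hr0, C, hC⟩ := hr
  refine ⟨strictMono_nat_of_lt_succ fun k => ?_, fun k => Nat.add_pos_left (hr0 k) _,
    C + (1 + α), fun k => ?_⟩
  · have := hgap k
    have := he k
    simp only [Pi.add_apply]
    omega
  · have hek : |phaseSeq α e k| ≤ 1 + α := by
      have h0 : (e k : ℝ) ≤ 1 := by exact_mod_cast he k
      have h1 : (e (k + 1) : ℝ) ≤ 1 := by exact_mod_cast he (k + 1)
      rw [phaseSeq, abs_le]
      constructor <;> nlinarith [(e k).cast_nonneg (α := ℝ), (e (k + 1)).cast_nonneg (α := ℝ)]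
    rw [phaseSeq_add]
    exact (abs_add_le _ _).trans (add_le_add (hC k) hek)

lemma periodic_phaseSeq_ite_dvd (α : ℝ) (m : ℕ) :
    Function.Periodic (phaseSeq α fun k => if m ∣ k then 1 else 0) m := fun k => by
  simp only [phaseSeq, add_right_comm k m 1, Nat.dvd_add_self_right]

lemma not_exists_period_phaseSeq_ite_dvd {α : ℝ} {m : ℕ} (hα : 0 < α) (hm : 0 < m) :
    ¬ ∃ d : ℕ, d ∣ m ∧ d < m ∧ ∀ j < m,
      phaseSeq α (fun k => if m ∣ k then 1 else 0) ((j + d) % m) =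
        phaseSeq α (fun k => if m ∣ k then 1 else 0) j := by
  rintro ⟨d, hdm, hdlt, hd⟩
  have hd0 : 0 < d := Nat.pos_of_dvd_of_pos hdm hm
  have h0 := hd 0 hm
  rw [zero_add, Nat.mod_eq_of_lt hdlt] at h0
  have hd' : ¬ m ∣ d := Nat.not_dvd_of_pos_of_lt hd0 hdlt
  have h1 : ¬ m ∣ 1 := Nat.not_dvd_of_pos_of_lt one_pos (by omega)
  -- the phase of the indicator is `-α` at `0` but nonnegative at `d`
  simp only [phaseSeq, if_neg hd', if_neg h1, zero_add, if_pos (dvd_zero m)] at h0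
  split_ifs at h0 <;> push_cast at h0 <;> linarith

lemma HasPisotProperty.exists_alphaAdmissible_phaseSeq_tendsto_cycle {α : ℝ}
    (hP : HasPisotProperty α) (hα : 1 < α) {m : ℕ} (hm : 0 < m) :
    ∃ n : ℕ → ℕ, AlphaAdmissible α n ∧ ∃ L : ℕ → ℝ,
      (∀ j < m, Tendsto (fun k => phaseSeq α n (k * m + j)) atTop (𝓝 (L j))) ∧
      ¬ ∃ d : ℕ, d ∣ m ∧ d < m ∧ ∀ j < m, L ((j + d) % m) = L j := by
  obtain ⟨r, hr, hgap, hlim⟩ := hP.exists_alphaAdmissible_phaseSeq_tendsto_zero hα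
  set e : ℕ → ℕ := fun k => if m ∣ k then 1 else 0
  have he : ∀ k, e k ≤ 1 := fun k => by
    simp only [e]
    split_ifs <;> norm_num
  refine ⟨r + e, hr.add (by linarith) hgap he, phaseSeq α e, fun j _ => ?_,
    not_exists_period_phaseSeq_ite_dvd (by linarith) hm⟩
  have hlim' := (hlim.comp (tendsto_atTop_mono (fun q => Nat.le_add_right_of_le
    (Nat.le_mul_of_pos_right q hm)) tendsto_id : Tendsto (· * m + j) _ _)).add_const
    (phaseSeq α e j)
  rw [zero_add] at hlim'
  refine hlim'.congr fun q => ?_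
  have hq := (periodic_phaseSeq_ite_dvd α m).nat_mul q j
  rw [Nat.cast_id] at hq
  rw [Function.comp_apply, phaseSeq_add, add_comm (q * m), hq]

/-- For `α > 1` and `m ≥ 1`, the following are equivalent: (i) `α` has the Pisot property;
(ii) there is an `α`-admissible sequence with converging phase sequence; (iii) there is an
`α`-admissible sequence whose phase sequence converges to a cycle of exact period `m`. -/
theorem pisot_iff_admissible_phase_converges (α : ℝ) (hα : 1 < α) (m : ℕ) (hm : 1 ≤ m) :
    (HasPisotProperty α ↔
      ∃ n : ℕ → ℕ, AlphaAdmissible α n ∧ ∃ L : ℝ, Tendsto (phaseSeq α n) atTop (𝓝 L)) ∧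
    ((∃ n : ℕ → ℕ, AlphaAdmissible α n ∧ ∃ L : ℝ, Tendsto (phaseSeq α n) atTop (𝓝 L)) ↔
      (∃ n : ℕ → ℕ, AlphaAdmissible α n ∧ ∃ L : ℕ → ℝ,
        (∀ j < m, Tendsto (fun k => phaseSeq α n (k * m + j)) atTop (𝓝 (L j))) ∧
        ¬ ∃ d : ℕ, d ∣ m ∧ d < m ∧ ∀ j < m, L ((j + d) % m) = L j)) := by
  have pisot_of_converges : (∃ n : ℕ → ℕ, AlphaAdmissible α n ∧ ∃ L : ℝ,
      Tendsto (phaseSeq α n) atTop (𝓝 L)) → HasPisotProperty α := fun ⟨n, hn, L, hL⟩ =>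
    hn.hasPisotProperty_of_tendsto_phaseSeq_sub hα one_pos
      (by simpa using ((tendsto_add_atTop_iff_nat 1).2 hL).sub hL)
  have converges_of_pisot (hP : HasPisotProperty α) : ∃ n : ℕ → ℕ, AlphaAdmissible α n ∧
      ∃ L : ℝ, Tendsto (phaseSeq α n) atTop (𝓝 L) :=
    let ⟨n, hn, _, hlim⟩ := hP.exists_alphaAdmissible_phaseSeq_tendsto_zero hα
    ⟨n, hn, 0, hlim⟩
  refine ⟨⟨converges_of_pisot, pisot_of_converges⟩, fun h => ?_, fun h => ?_⟩
  · exact (pisot_of_converges h).exists_alphaAdmissible_phaseSeq_tendsto_cycle hα hm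
  · obtain ⟨n, hn, L, hL, -⟩ := h
    exact converges_of_pisot
      (hn.hasPisotProperty_of_tendsto_phaseSeq_sub hα hm (tendsto_add_sub_of_tendsto_mul_add hm hL))
end

section
/- Let α > 1 be a real number and let (n_k)_{k≥0} be a strictly increasing sequence of positive integers such that n_{k+1} − α·n_k → 0 as k → ∞ (i.e. (n_k) is an α-admissible sequence whose phase sequence converges to zero). Then there exists a real number ζ > 0 such that ‖ζ·α^k‖ → 0 as k → ∞, where ‖x‖ denotes the distance from x to the nearest integer; in particular α has the Pisot property. -/
open Filter Topology

/-- If `(n_k)` is a strictly increasing sequence of positive integers with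
`n_{k+1} - α n_k → 0` (an `α`-admissible sequence whose phase sequence converges to zero),
then there is `ζ > 0` with `‖ζ α^k‖ → 0`, where `‖·‖` is the distance to the nearest
integer; in particular `α` has the Pisot property. -/
theorem pisot_of_phase_tendsto_zero (α : ℝ) (hα : 1 < α) (n : ℕ → ℕ)
    (hmono : StrictMono n) (hpos : ∀ k, 0 < n k)
    (h : Tendsto (fun k => (n (k + 1) : ℝ) - α * (n k : ℝ)) atTop (𝓝 0)) :
    ∃ ζ : ℝ, 0 < ζ ∧
      Tendsto (fun k : ℕ => |ζ * α ^ k - (round (ζ * α ^ k) : ℝ)|) atTop (𝓝 0) := by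
  have hα0 : (0:ℝ) < α := lt_trans one_pos hα
  have hαne : α ≠ 0 := ne_of_gt hα0
  have hαk : ∀ k : ℕ, (0:ℝ) < α ^ k := fun k => pow_pos hα0 k
  have hinv : |α⁻¹| < 1 := by
    rw [abs_of_pos (inv_pos.mpr hα0)]
    exact inv_lt_one_of_one_lt₀ hα
  have hgeo : Summable (fun m : ℕ => (α⁻¹) ^ m) := summable_geometric_of_lt_one
    (le_of_lt (inv_pos.mpr hα0)) (by rw [abs_of_pos (inv_pos.mpr hα0)] at hinv; exact hinv)
  set e : ℕ → ℝ := fun k => (n (k + 1) : ℝ) - α * (n k : ℝ) with he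
  set c : ℕ → ℝ := fun k => (n k : ℝ) / α ^ k with hc
  -- distance between consecutive terms of c
  have hdist : ∀ k, dist (c k) (c (k + 1)) = |e k| / α ^ (k + 1) := by
    intro k
    rw [Real.dist_eq]
    have hck : c k - c (k + 1) = -(e k) / α ^ (k + 1) := by
      simp only [hc, he]
      field_simp
      ring
    rw [hck, abs_div, abs_neg, abs_of_pos (hαk (k + 1))]
  -- e is bounded
  obtain ⟨M, hM⟩ : ∃ M : ℝ, ∀ k, |e k| ≤ M := by
    have : Tendsto (fun k => |e k|) atTop (𝓝 0) := by
      simpa using h.abs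
    obtain ⟨M, hM⟩ := this.bddAbove_range
    exact ⟨M, fun k => hM ⟨k, rfl⟩⟩
  -- c is Cauchy
  have hsum0 : ∀ (B : ℝ) (K : ℕ), Summable (fun m : ℕ => B * (α⁻¹) ^ (K + m + 1)) := by
    intro B K
    have : (fun m : ℕ => B * (α⁻¹) ^ (K + m + 1))
        = fun m : ℕ => (B * (α⁻¹) ^ (K + 1)) * (α⁻¹) ^ m := by
      funext m
      rw [show K + m + 1 = (K + 1) + m by ring, pow_add]
      ring
    rw [this]
    exact hgeo.mul_left _
  have hbound : ∀ (B : ℝ) (K k : ℕ), |e k| ≤ B →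
      dist (c k) (c (k + 1)) ≤ B * (α⁻¹) ^ (k + 1) := by
    intro B K k hk
    rw [hdist k, div_le_iff₀ (hαk (k + 1))]
    calc |e k| ≤ B := hk
    _ = B * (α⁻¹) ^ (k + 1) * α ^ (k + 1) := by
        rw [mul_assoc, inv_pow, inv_mul_cancel₀ (ne_of_gt (hαk (k + 1))), mul_one]
  have hcauchy : CauchySeq c := by
    apply cauchySeq_of_dist_le_of_summable (fun m => M * (α⁻¹) ^ (0 + m + 1))
    · intro k
      simpa using hbound M 0 k (hM k)
    · exact hsum0 M 0
  obtain ⟨ζ, hζtend⟩ := cauchySeq_tendsto_of_complete hcauchy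
  -- key estimate
  have key : ∀ (B : ℝ) (K : ℕ), (∀ j, K ≤ j → |e j| ≤ B) →
      ∀ k, K ≤ k → |ζ * α ^ k - (n k : ℝ)| ≤ B * (α - 1)⁻¹ := by
    intro B K hB k hk
    obtain ⟨j, rfl⟩ := Nat.exists_eq_add_of_le hk
    have hshift : Tendsto (fun m => c (K + m)) atTop (𝓝 ζ) :=
      (hζtend.comp (tendsto_add_atTop_nat K)).congr (fun m => by simp only [Function.comp_apply, Nat.add_comm])
    have hd : ∀ m, dist (c (K + m)) (c (K + m).succ) ≤ B * (α⁻¹) ^ (K + m + 1) := by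
      intro m
      exact hbound B K (K + m) (hB _ (Nat.le_add_right _ _))
    have hest := dist_le_tsum_of_dist_le_of_tendsto
      (f := fun m => c (K + m)) (fun m => B * (α⁻¹) ^ (K + m + 1)) hd (hsum0 B K) hshift j
    -- compute the tsum
    have htsum : ∑' m : ℕ, B * (α⁻¹) ^ (K + (j + m) + 1)
        = B * (α⁻¹) ^ (K + j + 1) * (1 - α⁻¹)⁻¹ := by
      have heq : (fun m : ℕ => B * (α⁻¹) ^ (K + (j + m) + 1))
          = fun m : ℕ => (B * (α⁻¹) ^ (K + j + 1)) * (α⁻¹) ^ m := by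
        funext m
        rw [show K + (j + m) + 1 = (K + j + 1) + m by ring, pow_add]
        ring
      rw [heq, tsum_mul_left, tsum_geometric_of_lt_one (le_of_lt (inv_pos.mpr hα0))
        (by rw [abs_of_pos (inv_pos.mpr hα0)] at hinv; exact hinv)]
    rw [htsum] at hest
    -- now convert dist bound to the statement
    have hck : c (K + j) * α ^ (K + j) = (n (K + j) : ℝ) := by
      simp only [hc]
      field_simp
    have h1 : |ζ * α ^ (K + j) - (n (K + j) : ℝ)| = dist (c (K + j)) ζ * α ^ (K + j) := by
      have heq : ζ * α ^ (K + j) - (n (K + j) : ℝ) = (ζ - c (K + j)) * α ^ (K + j) := by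
        rw [sub_mul, hck]
      rw [heq, abs_mul, abs_of_pos (hαk (K + j)), Real.dist_eq, abs_sub_comm]
    rw [h1]
    calc dist (c (K + j)) ζ * α ^ (K + j)
        ≤ B * (α⁻¹) ^ (K + j + 1) * (1 - α⁻¹)⁻¹ * α ^ (K + j) :=
          mul_le_mul_of_nonneg_right hest (le_of_lt (hαk (K + j)))
      _ = B * ((1 - α⁻¹)⁻¹ * ((α⁻¹) ^ (K + j + 1) * α ^ (K + j))) := by ring
      _ = B * (α - 1)⁻¹ := by
          have h3 : (α⁻¹) ^ (K + j + 1) * α ^ (K + j) = α⁻¹ := by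
            rw [pow_succ, mul_comm ((α⁻¹) ^ (K + j)) α⁻¹, mul_assoc, inv_pow,
              inv_mul_cancel₀ (ne_of_gt (hαk (K + j))), mul_one]
          have h4 : (1 - α⁻¹)⁻¹ * α⁻¹ = (α - 1)⁻¹ := by
            rw [← mul_inv]
            congr 1
            field_simp
          rw [h3, h4]
  -- r k := ζ α^k - n k tends to 0
  have hr : Tendsto (fun k => ζ * α ^ k - (n k : ℝ)) atTop (𝓝 0) := by
    rw [Metric.tendsto_atTop]
    intro ε hε
    have hB : (0:ℝ) < ε / 2 * (α - 1) := by
      apply mul_pos (half_pos hε)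
      linarith
    obtain ⟨K, hK⟩ := (Metric.tendsto_atTop.mp h) (ε / 2 * (α - 1)) hB
    refine ⟨K, fun k hk => ?_⟩
    have hBj : ∀ j, K ≤ j → |e j| ≤ ε / 2 * (α - 1) := by
      intro j hj
      have := hK j hj
      rw [Real.dist_eq, sub_zero] at this
      exact le_of_lt this
    have := key (ε / 2 * (α - 1)) K hBj k hk
    rw [Real.dist_eq, sub_zero]
    calc |ζ * α ^ k - (n k : ℝ)| ≤ ε / 2 * (α - 1) * (α - 1)⁻¹ := this
      _ = ε / 2 := by
          rw [mul_assoc, mul_inv_cancel₀ (by linarith : α - 1 ≠ 0), mul_one]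
      _ < ε := half_lt_self hε
  -- ζ > 0
  have hζpos : 0 < ζ := by
    obtain ⟨K, hK⟩ := (Metric.tendsto_atTop.mp hr) (1/2) (by norm_num)
    have h1 := hK K le_rfl
    rw [Real.dist_eq, sub_zero] at h1
    have h2 : (1:ℝ) ≤ (n K : ℝ) := by exact_mod_cast hpos K
    have h3 : 0 < ζ * α ^ K := by
      have := abs_lt.mp h1
      linarith [this.1]
    have := div_pos h3 (hαk K)
    rwa [mul_div_assoc, div_self (ne_of_gt (hαk K)), mul_one] at this
  refine ⟨ζ, hζpos, ?_⟩
  -- squeeze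
  apply squeeze_zero (fun k => abs_nonneg _) (fun k => ?_) (by simpa using hr.abs)
  have := round_le (ζ * α ^ k) ((n k : ℤ))
  simpa using this
end

section
/- Let α > 1 be a real number with the Pisot property: there exists a nonzero real number ζ such that ‖ζ·α^k‖ → 0 as k → ∞, where ‖x‖ is the distance from x to the nearest integer. Then there exists a strictly increasing sequence (n_k)_{k≥0} of positive integers such that n_{k+1} − α·n_k → 0 as k → ∞; i.e. there exists an α-admissible sequence whose phase sequence converges to 0. -/
open Filter Topology

/-- If `α > 1` has the Pisot property (there is a nonzero real `ζ` with `‖ζ α^k‖ → 0`,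
where `‖·‖` is the distance to the nearest integer), then there exists a strictly increasing
sequence of positive integers with `n_{k+1} - α n_k → 0`; i.e. an `α`-admissible sequence
whose phase sequence converges to `0`. -/
theorem exists_admissible_phase_zero_of_pisot (α : ℝ) (hα : 1 < α) (ζ : ℝ) (hζ : ζ ≠ 0)
    (h : Tendsto (fun k : ℕ => |ζ * α ^ k - (round (ζ * α ^ k) : ℝ)|) atTop (𝓝 0)) :
    ∃ n : ℕ → ℕ, StrictMono n ∧ (∀ k, 0 < n k) ∧
      Tendsto (fun k => (n (k + 1) : ℝ) - α * (n k : ℝ)) atTop (𝓝 0) := by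
  -- sign
  set s : ℝ := if 0 < ζ then 1 else -1 with hs
  have hsζ : 0 < s * ζ := by
    rcases hζ.lt_or_gt with hneg | hpos
    · simp only [hs, if_neg (not_lt.mpr hneg.le)]
      nlinarith
    · simp only [hs, if_pos hpos]; nlinarith
  have hss : s * s = 1 := by rcases le_or_gt ζ 0 with h' | h' <;>
    simp [hs, not_lt.mpr, h']
  -- error term
  set e : ℕ → ℝ := fun k => ζ * α ^ k - (round (ζ * α ^ k) : ℝ) with he_def
  have he : Tendsto e atTop (𝓝 0) := tendsto_zero_iff_abs_tendsto_zero e |>.mpr h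
  -- the integer sequence
  set M : ℕ → ℤ := fun k => if 0 < ζ then round (ζ * α ^ k) else -(round (ζ * α ^ k)) with hM_def
  have hMcast : ∀ k, (M k : ℝ) = s * ζ * α ^ k - s * e k := by
    intro k
    rcases lt_or_ge 0 ζ with h' | h'
    · simp only [hM_def, hs, if_pos h', he_def]; ring
    · simp only [hM_def, hs, if_neg (not_lt.mpr h'), he_def]; push_cast; ring
  -- M → ∞
  have hMtop : Tendsto (fun k => (M k : ℝ)) atTop atTop := by
    have h1 : Tendsto (fun k : ℕ => s * ζ * α ^ k) atTop atTop :=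
      (tendsto_pow_atTop_atTop_of_one_lt hα).const_mul_atTop hsζ
    have h2 : Tendsto (fun k => -(s * e k)) atTop (𝓝 (-(s * 0))) :=
      ((he.const_mul s).neg)
    rw [mul_zero, neg_zero] at h2
    have := h2.add_atTop h1
    refine this.congr fun k => ?_
    rw [hMcast k]; ring
  -- phase of M
  have hg : Tendsto (fun k => (M (k + 1) : ℝ) - α * (M k : ℝ)) atTop (𝓝 0) := by
    have h1 : Tendsto (fun k => s * (α * e k - e (k + 1))) atTop (𝓝 (s * (α * 0 - 0))) := by
      exact ((he.const_mul α).sub (he.comp (tendsto_add_atTop_nat 1))).const_mul s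
    rw [mul_zero, sub_zero, mul_zero] at h1
    refine h1.congr fun k => ?_
    rw [hMcast (k + 1), hMcast k]; ring
  -- choose K
  have hev : ∀ᶠ k in atTop, 1 ≤ (M k : ℝ) ∧
      |(M (k + 1) : ℝ) - α * (M k : ℝ)| < α - 1 := by
    have h1 := hMtop.eventually_ge_atTop 1
    have h2 : ∀ᶠ k in atTop, |(M (k + 1) : ℝ) - α * (M k : ℝ)| < α - 1 := by
      have habs := hg.abs
      rw [abs_zero] at habs
      exact habs.eventually_lt_const (by linarith)
    exact h1.and h2
  clear_value M
  obtain ⟨K, hK⟩ := eventually_atTop.mp hev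
  refine ⟨fun k => (M (k + K)).toNat, ?_, ?_, ?_⟩
  · -- strict mono
    apply strictMono_nat_of_lt_succ
    intro k
    have h1 := hK (k + K) (by omega)
    have hM1 : (1 : ℤ) ≤ M (k + K) := by exact_mod_cast h1.1
    have hlt : M (k + K) < M (k + K + 1) := by
      have habs := h1.2
      have : (M (k + K) : ℝ) < (M (k + K + 1) : ℝ) := by
        have hb := abs_lt.mp habs
        nlinarith [h1.1]
      exact_mod_cast this
    have : k + 1 + K = k + K + 1 := by omega
    rw [this]
    omega
  · -- positivity
    intro k
    have h1 := hK (k + K) (by omega)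
    have hM1 : (1 : ℤ) ≤ M (k + K) := by exact_mod_cast h1.1
    show 0 < (M (k + K)).toNat
    omega
  · -- phase tendsto
    have := hg.comp (tendsto_add_atTop_nat K)
    refine this.congr fun k => ?_
    have h1 := hK (k + K) (by omega)
    have h2 := hK (k + 1 + K) (by omega)
    have hM1 : (0 : ℤ) ≤ M (k + K) := by
      have : (1 : ℤ) ≤ M (k + K) := by exact_mod_cast h1.1
      omega
    have hM2 : (0 : ℤ) ≤ M (k + 1 + K) := by
      have : (1 : ℤ) ≤ M (k + 1 + K) := by exact_mod_cast h2.1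
      omega
    show (M (k + K + 1) : ℝ) - α * (M (k + K) : ℝ) =
      ((M (k + 1 + K)).toNat : ℝ) - α * ((M (k + K)).toNat : ℝ)
    have hkk : k + K + 1 = k + 1 + K := by omega
    rw [hkk, show ((M (k + 1 + K)).toNat : ℝ) = (M (k + 1 + K) : ℝ) from by
        exact_mod_cast Int.toNat_of_nonneg hM2,
      show ((M (k + K)).toNat : ℝ) = (M (k + K) : ℝ) from by
        exact_mod_cast Int.toNat_of_nonneg hM1]
end

section
/- Let α > 1 be a real number and let (n_k)_{k≥0} be a strictly increasing sequence of positive integers such that the sequence (n_{k+1} − α·n_k)_{k≥0} converges. Then the sequence m_k := n_{k+1} − n_k satisfies: m_k → ∞, (m_k) is eventually strictly increasing, and m_{k+1} − α·m_k → 0 as k → ∞; i.e. a tail of (m_k) is an α-admissible sequence whose phase sequence converges to 0. -/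
open Filter Topology

/-- If `(n_k)` is a strictly increasing sequence of positive integers such that
`n_{k+1} - α n_k` converges, then `m_k := n_{k+1} - n_k` tends to infinity, is eventually
strictly increasing, and satisfies `m_{k+1} - α m_k → 0`; i.e. a tail of `(m_k)` is an
`α`-admissible sequence whose phase sequence converges to `0`. -/
theorem difference_sequence_admissible (α : ℝ) (hα : 1 < α) (n : ℕ → ℕ)
    (hmono : StrictMono n) (hpos : ∀ k, 0 < n k)
    (L : ℝ) (h : Tendsto (fun k => (n (k + 1) : ℝ) - α * (n k : ℝ)) atTop (𝓝 L)) :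
    Tendsto (fun k => n (k + 1) - n k) atTop atTop ∧
    (∃ N : ℕ, ∀ k ≥ N, n (k + 1) - n k < n (k + 2) - n (k + 1)) ∧
    Tendsto (fun k => ((n (k + 2) - n (k + 1) : ℕ) : ℝ) - α * ((n (k + 1) - n k : ℕ) : ℝ))
      atTop (𝓝 0) := by
  have hle : ∀ k, n k ≤ n (k + 1) := fun k => (hmono (Nat.lt_succ_self k)).le
  have hcast : ∀ k, ((n (k + 1) - n k : ℕ) : ℝ) = (n (k + 1) : ℝ) - (n k : ℝ) :=
    fun k => Nat.cast_sub (hle k)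
  have hn : Tendsto (fun k => ((n k : ℝ))) atTop atTop :=
    tendsto_natCast_atTop_atTop.comp hmono.tendsto_atTop
  have hmr : Tendsto (fun k => (n (k + 1) : ℝ) - (n k : ℝ)) atTop atTop := by
    have heq : (fun k => (n (k + 1) : ℝ) - (n k : ℝ))
        = fun k => ((n (k + 1) : ℝ) - α * (n k : ℝ)) + (α - 1) * (n k : ℝ) := by
      funext k; ring
    rw [heq]
    exact h.add_atTop (Tendsto.const_mul_atTop (by linarith) hn)
  have hm : Tendsto (fun k => n (k + 1) - n k) atTop atTop := by
    rw [← tendsto_natCast_atTop_iff (R := ℝ)]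
    simpa only [hcast] using hmr
  have h' : Tendsto (fun k => (n (k + 2) : ℝ) - α * (n (k + 1) : ℝ)) atTop (𝓝 L) :=
    h.comp (tendsto_add_atTop_nat 1)
  have hphase : Tendsto
      (fun k => ((n (k + 2) - n (k + 1) : ℕ) : ℝ) - α * ((n (k + 1) - n k : ℕ) : ℝ))
      atTop (𝓝 0) := by
    have hfun : (fun k => ((n (k + 2) - n (k + 1) : ℕ) : ℝ) - α * ((n (k + 1) - n k : ℕ) : ℝ))
        = fun k => ((n (k + 2) : ℝ) - α * (n (k + 1) : ℝ)) - ((n (k + 1) : ℝ) - α * (n k : ℝ)) := by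
      funext k; rw [hcast (k + 1), hcast k]; ring
    rw [hfun]
    simpa using h'.sub h
  have hdiff : Tendsto
      (fun k => ((n (k + 2) - n (k + 1) : ℕ) : ℝ) - ((n (k + 1) - n k : ℕ) : ℝ)) atTop atTop := by
    have heq : (fun k => ((n (k + 2) - n (k + 1) : ℕ) : ℝ) - ((n (k + 1) - n k : ℕ) : ℝ))
        = fun k => (((n (k + 2) - n (k + 1) : ℕ) : ℝ) - α * ((n (k + 1) - n k : ℕ) : ℝ))
          + (α - 1) * ((n (k + 1) - n k : ℕ) : ℝ) := by
      funext k; ring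
    rw [heq]
    exact hphase.add_atTop
      (Tendsto.const_mul_atTop (by linarith) (tendsto_natCast_atTop_atTop.comp hm))
  obtain ⟨N, hN⟩ := eventually_atTop.mp (hdiff.eventually_gt_atTop 0)
  refine ⟨hm, ⟨N, fun k hk => ?_⟩, hphase⟩
  have := sub_pos.mp (hN k hk)
  exact_mod_cast this
end

section
/- For every nonzero real number x there exists a constant C > 0 such that for all integers n ≥ 1, the partial sums of the series ∑ k^{−(1−ix)} satisfy |∑_{k=1}^{n} k^{−(1−ix)}| ≤ C, where for a positive integer k and s ∈ ℂ one sets k^{−s} := exp(−s·ln k) ∈ ℂ. -/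
/-!
Compare the sum with an integral. With `r = -(1 - i x)`, on `[k, k + 1]` the function
`t ↦ t ^ r` has derivative of modulus `|r| / t ^ 2 ≤ |r| / k ^ 2`, so `k ^ r` differs from
`∫_k^{k+1} t ^ r dt` by at most `|r| / k ^ 2`, and these errors have sum at most `2 |r|`.
The integral itself is `∫_1^{n+1} t ^ r dt = ((n + 1) ^ {ix} - 1) / (ix)`, of modulus at most
`2 / |x|` since `|t ^ {ix}| = 1`.
-/

open intervalIntegral Finset

section SumIntegralComparison

variable {E : Type*} [NormedAddCommGroup E] [NormedSpace ℝ E] [CompleteSpace E]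
  {f f' : ℝ → E}

theorem norm_sub_integral_unit_interval_le {a M : ℝ}
    (hf : ∀ t ∈ Set.Icc a (a + 1), HasDerivAt f (f' t) t)
    (hf' : ∀ t ∈ Set.Icc a (a + 1), ‖f' t‖ ≤ M) :
    ‖f a - ∫ t in a..a + 1, f t‖ ≤ M := by
  have ha : a ≤ a + 1 := by linarith
  have hint : IntervalIntegrable f MeasureTheory.volume a (a + 1) := by
    refine ContinuousOn.intervalIntegrable ?_
    rw [Set.uIcc_of_le ha]
    exact fun t ht => (hf t ht).continuousAt.continuousWithinAt
  have hmvt := norm_image_sub_le_of_norm_deriv_le_segment'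
    (fun t ht => (hf t ht).hasDerivWithinAt) (fun t ht => hf' t (Set.Ico_subset_Icc_self ht))
  calc ‖f a - ∫ t in a..a + 1, f t‖ = ‖∫ t in a..a + 1, (f a - f t)‖ := by
        rw [integral_sub intervalIntegrable_const hint, integral_const]
        simp
    _ ≤ M * |a + 1 - a| := by
        refine norm_integral_le_of_norm_le_const fun t ht => ?_
        rw [Set.uIoc_of_le ha] at ht
        rw [norm_sub_rev]
        calc ‖f t - f a‖ ≤ M * (t - a) := hmvt t ⟨ht.1.le, ht.2⟩
          _ ≤ M * 1 := by
              gcongr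
              · exact (norm_nonneg _).trans (hf' a ⟨le_rfl, ha⟩)
              · linarith [ht.2]
          _ = M := mul_one M
    _ = M := by simp

theorem norm_sum_Icc_sub_integral_le {C : ℝ}
    (hf : ∀ t, 1 ≤ t → HasDerivAt f (f' t) t) (hf' : ∀ t, 1 ≤ t → ‖f' t‖ ≤ C / t ^ 2) (n : ℕ) :
    ‖∑ k ∈ Icc 1 n, f k - ∫ t in (1 : ℝ)..(n + 1), f t‖ ≤ 2 * C := by
  have hC : 0 ≤ C := by simpa using (norm_nonneg _).trans (hf' 1 le_rfl)
  have hunit : ∀ k ∈ Icc 1 n, ‖f k - ∫ t in (k : ℝ)..k + 1, f t‖ ≤ C * ((k : ℝ) ^ 2)⁻¹ := by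
    intro k hk
    have hk : (1 : ℝ) ≤ k := by exact_mod_cast (mem_Icc.1 hk).1
    refine norm_sub_integral_unit_interval_le (fun t ht => hf t (hk.trans ht.1))
      fun t ht => (hf' t (hk.trans ht.1)).trans ?_
    rw [div_eq_mul_inv]
    gcongr
    exact ht.1
  have htelescope :
      ∑ k ∈ Icc 1 n, ∫ t in (k : ℝ)..k + 1, f t = ∫ t in (1 : ℝ)..(n + 1), f t := by
    rw [← Finset.Ico_add_one_right_eq_Icc]
    have := sum_integral_adjacent_intervals_Ico (a := fun k : ℕ => (k : ℝ)) (f := f)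
      (μ := MeasureTheory.volume) (Nat.le_add_left 1 n) fun k hk => by
        have hk : (1 : ℝ) ≤ k := by exact_mod_cast hk.1
        refine ContinuousOn.intervalIntegrable fun t ht => ?_
        rw [Set.uIcc_of_le (by simp)] at ht
        exact (hf t (hk.trans ht.1)).continuousAt.continuousWithinAt
    simpa using this
  calc ‖∑ k ∈ Icc 1 n, f k - ∫ t in (1 : ℝ)..(n + 1), f t‖
      = ‖∑ k ∈ Icc 1 n, (f k - ∫ t in (k : ℝ)..k + 1, f t)‖ := by
        rw [sum_sub_distrib, htelescope]
    _ ≤ ∑ k ∈ Icc 1 n, C * ((k : ℝ) ^ 2)⁻¹ := norm_sum_le_of_le _ hunit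
    _ = C * ∑ k ∈ Ioo 0 (n + 1), ((k : ℝ) ^ 2)⁻¹ := by
        rw [mul_sum]
        rfl
    _ ≤ C * 2 := by
        gcongr
        simpa using sum_Ioo_inv_sq_le (α := ℝ) 0 (n + 1)
    _ = 2 * C := mul_comm _ _

end SumIntegralComparison

section CpowReEqNegOne

variable {r : ℂ} (hre : r.re = -1)
include hre

theorem norm_integral_ofReal_cpow_le (hr : r ≠ -1) {a b : ℝ} (ha : 0 < a) (hb : 0 < b) :
    ‖∫ t in a..b, (t : ℂ) ^ r‖ ≤ 2 / ‖r + 1‖ := by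
  have h0 : (0 : ℝ) ∉ Set.uIcc a b := fun h => by
    rcases Set.mem_uIcc.1 h with h | h <;> linarith [h.1]
  have hre' : (r + 1).re = 0 := by simp [hre]
  rw [integral_cpow (Or.inr ⟨hr, h0⟩), norm_div]
  gcongr
  calc ‖(b : ℂ) ^ (r + 1) - (a : ℂ) ^ (r + 1)‖
      ≤ ‖(b : ℂ) ^ (r + 1)‖ + ‖(a : ℂ) ^ (r + 1)‖ := norm_sub_le _ _
    _ = 2 := by
        rw [Complex.norm_cpow_eq_rpow_re_of_pos ha, Complex.norm_cpow_eq_rpow_re_of_pos hb,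
          hre']
        norm_num

theorem norm_mul_ofReal_cpow_sub_one {t : ℝ} (ht : 0 < t) :
    ‖r * (t : ℂ) ^ (r - 1)‖ = ‖r‖ / t ^ 2 := by
  have hre' : (r - 1).re = -2 := by simp [hre]; norm_num
  rw [norm_mul, Complex.norm_cpow_eq_rpow_re_of_pos ht, hre', div_eq_mul_inv,
    Real.rpow_neg ht.le]
  norm_cast

end CpowReEqNegOne

/-- For every nonzero real `x`, the partial sums of `∑ k^{-(1-ix)}` are uniformly bounded:
there is `C > 0` such that `|∑_{k=1}^n k^{-(1-ix)}| ≤ C` for all `n ≥ 1`, where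
`k^{-s} = exp(-s ln k)`. -/
theorem partial_sums_bounded (x : ℝ) (hx : x ≠ 0) :
    ∃ C : ℝ, 0 < C ∧ ∀ n : ℕ, 1 ≤ n →
      ‖∑ k ∈ Finset.Icc 1 n,
        Complex.exp (-(1 - Complex.I * (x : ℂ)) * (Real.log (k : ℝ) : ℂ))‖ ≤ C := by
  set r : ℂ := -(1 - Complex.I * x)
  have hr1 : r + 1 = Complex.I * x := by ring
  have hre : r.re = -1 := by simp [r]
  have hr : r ≠ -1 := fun h => by simp [h, hx] at hr1
  refine ⟨2 * ‖r‖ + 2 / |x|, by positivity, fun n _ => ?_⟩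
  have hterm : ∀ k ∈ Icc 1 n, Complex.exp (r * Real.log (k : ℝ)) = ((k : ℝ) : ℂ) ^ r := by
    intro k hk
    have hk : (0 : ℝ) < k := by exact_mod_cast (mem_Icc.1 hk).1
    rw [Complex.cpow_def_of_ne_zero (by exact_mod_cast hk.ne'), ← Complex.ofReal_log hk.le,
      mul_comm]
  have hsum := norm_sum_Icc_sub_integral_le
    (fun t ht => hasDerivAt_ofReal_cpow_const (by linarith) fun h => by simp [h] at hre)
    (fun t ht => (norm_mul_ofReal_cpow_sub_one hre (by linarith)).le) n
  have hint := norm_integral_ofReal_cpow_le hre hr one_pos (by positivity : (0 : ℝ) < n + 1)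
  rw [hr1, norm_mul, Complex.norm_I, Complex.norm_real, one_mul, Real.norm_eq_abs] at hint
  rw [sum_congr rfl hterm]
  linarith [norm_sub_norm_le (∑ k ∈ Icc 1 n, ((k : ℝ) : ℂ) ^ r)
    (∫ t in (1 : ℝ)..(n + 1), (t : ℂ) ^ r)]
end

section
/- Let c > 0 be a real number, let S := {u ∈ ℂ : 0 < Re u < π/c}, and let f(u) := e^{−u}·cos(cu)/sin(cu), which is holomorphic on the convex open set S. For W ∈ S define F_c(W) as the integral of f along the straight segment from π/(2c) to W (which lies in S). Let ℛ₀ := {W ∈ S : −1/2 < Im W < 1/2}. Then, as W → 0 within ℛ₀, F_c(W) − (1/c)·Log(cW) converges to −(1/c)·∫₀^{π/(2c)} e^{−u}·ln(sin(cu)) du, where Log denotes the principal branch of the complex logarithm and the real integral is a convergent improper integral. -/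
open Filter Topology Real MeasureTheory intervalIntegral

/-- The function `f(u) = e^{-u} cot(cu)`, holomorphic on the strip `0 < Re u < π/c`. -/
noncomputable def fcot (c : ℝ) (u : ℂ) : ℂ :=
  Complex.exp (-u) * (Complex.cos ((c : ℂ) * u) / Complex.sin ((c : ℂ) * u))

/-- The point `π/(2c) + t (W - π/(2c))` of the segment from `π/(2c)` to `W`. -/
noncomputable def segPoint (c : ℝ) (W : ℂ) (t : ℝ) : ℂ :=
  ((π / (2 * c) : ℝ) : ℂ) + (t : ℂ) * (W - ((π / (2 * c) : ℝ) : ℂ))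

/-- `F_c(W)`: the integral of `e^{-u} cot(cu)` along the segment from `π/(2c)` to `W`. -/
noncomputable def Fc (c : ℝ) (W : ℂ) : ℂ :=
  ∫ t in (0 : ℝ)..(1 : ℝ), (W - ((π / (2 * c) : ℝ) : ℂ)) * fcot c (segPoint c W t)

/-- The region `ℛ₀ = {W : 0 < Re W < π/c, -1/2 < Im W < 1/2}`. -/
def regionR0 (c : ℝ) : Set ℂ :=
  {W : ℂ | 0 < W.re ∧ W.re < π / c ∧ -(1 / 2) < W.im ∧ W.im < 1 / 2}

/-!
Near `0`, `f(u) = 1/(cu) + g(u)` with `g` holomorphic on the disc `|u| < π/c`: the singularity of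
`g` at `0` is removable because `u f(u) → 1/c`. A primitive `P` of `g` on the disc, plus
`(1/c) Log`, is a primitive of `f` on the right half of the disc, so `F_c(W) - (1/c) Log(cW)` is
`P(W)` up to a constant and converges as `W → 0`. The limit is identified along the real axis:
integrating by parts with `(log sin(cu) / c)' = cot(cu)` gives
`c F_c(x) = e^{-x} log sin(cx) - ∫ₓ^{π/(2c)} e^{-u} log sin(cu) du`, and
`e^{-x} log sin(cx) - log(cx) → 0` as `x → 0⁺`.
-/

open Set Metric

theorem Complex.sin_ne_zero_of_norm_lt_pi {z : ℂ} (hz : ‖z‖ < π) (h0 : z ≠ 0) :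
    Complex.sin z ≠ 0 := by
  rw [Complex.sin_ne_zero_iff]
  rintro k rfl
  have hk : |(k : ℝ)| < 1 := by
    rw [norm_mul, Complex.norm_intCast, Complex.norm_real, Real.norm_of_nonneg pi_pos.le] at hz
    nlinarith [pi_pos]
  have : k = 0 := by
    rw [← Int.cast_abs] at hk
    exact Int.abs_lt_one_iff.mp (by exact_mod_cast hk)
  simp [this] at h0

theorem integral_mul_comp_segment_eq_sub {f F : ℂ → ℂ} {s : Set ℂ} (hs : Convex ℝ s)
    (hF : ∀ z ∈ s, HasDerivAt F (f z) z) (hf : ContinuousOn f s) {a w : ℂ} (ha : a ∈ s)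
    (hw : w ∈ s) :
    ∫ t in (0 : ℝ)..1, (w - a) * f (a + t * (w - a)) = F w - F a := by
  have hseg : ∀ t ∈ uIcc (0 : ℝ) 1, a + t * (w - a) ∈ s := fun t ht => by
    rw [uIcc_of_le zero_le_one] at ht
    simpa [Complex.real_smul] using hs.add_smul_sub_mem ha hw ht
  have hcont : Continuous fun t : ℝ => a + t * (w - a) := by fun_prop
  have hderiv : ∀ t ∈ uIcc (0 : ℝ) 1,
      HasDerivAt (fun t : ℝ => F (a + t * (w - a))) ((w - a) * f (a + t * (w - a))) t := by
    intro t ht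
    have hline : HasDerivAt (fun t : ℝ => a + t * (w - a)) (w - a) t := by
      simpa using ((Complex.ofRealCLM.hasDerivAt (x := t)).mul_const (w - a)).const_add a
    exact ((hF _ (hseg t ht)).comp t hline).congr_deriv (mul_comm _ _)
  refine intervalIntegral.integral_eq_sub_of_hasDerivAt hderiv ?_ |>.trans (by simp)
  exact (continuousOn_const.mul (hf.comp hcont.continuousOn hseg)).intervalIntegrable

theorem tendsto_exp_mul_log_sin_sub_log (a : ℝ) :
    Tendsto (fun y => exp (a * y) * log (sin y) - log y) (𝓝[>] 0) (𝓝 0) := by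
  -- `exp (a y) log (sin y) - log y = exp (a y) log (sinc y) + dslope (exp (a ·)) 0 y * (y log y)`
  set e : ℝ → ℝ := fun y => exp (a * y)
  have hcont : ContinuousAt
      (fun y => e y * log (sinc y) + dslope e 0 y * (y * log y)) 0 := by
    have he : DifferentiableAt ℝ e 0 := by fun_prop
    have hlog : ContinuousAt (fun y => log (sinc y)) 0 :=
      (continuousAt_log (by simp)).comp continuous_sinc.continuousAt
    exact ((he.continuousAt.mul hlog).add
      ((continuousAt_dslope_same.mpr he).mul continuous_mul_log.continuousAt))
  have hlim : Tendsto (fun y => e y * log (sinc y) + dslope e 0 y * (y * log y))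
      (𝓝[>] 0) (𝓝 0) := by
    convert hcont.tendsto.mono_left nhdsWithin_le_nhds
    simp
  refine hlim.congr' ?_
  filter_upwards [Ioo_mem_nhdsGT pi_pos] with y ⟨hy0, hyπ⟩
  rw [sinc_of_ne_zero hy0.ne', log_div (sin_pos_of_pos_of_lt_pi hy0 hyπ).ne' hy0.ne',
    dslope_of_ne _ hy0.ne', slope_def_field]
  simp only [e, mul_zero, exp_zero]
  field_simp
  ring

theorem tendsto_ofReal_nhdsGT_zero :
    Tendsto (fun x : ℝ => (x : ℂ)) (𝓝[>] 0) (𝓝[{W : ℂ | 0 < W.re}] 0) := by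
  simpa using Complex.continuous_ofReal.continuousWithinAt.tendsto_nhdsWithin
    (fun x (hx : x ∈ Ioi 0) => show 0 < (x : ℂ).re by simpa using hx) (x := 0)

section

variable {c : ℝ}

theorem sin_mul_ne_zero_of_mem_ball (hc : 0 < c) {u : ℂ} (hu : u ∈ ball (0 : ℂ) (π / c))
    (hu0 : u ≠ 0) : Complex.sin (c * u) ≠ 0 := by
  refine Complex.sin_ne_zero_of_norm_lt_pi ?_ (mul_ne_zero (Complex.ofReal_ne_zero.mpr hc.ne') hu0)
  rw [mem_ball_zero_iff, lt_div_iff₀ hc] at hu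
  rwa [norm_mul, Complex.norm_real, Real.norm_of_nonneg hc.le, mul_comm]

theorem differentiableAt_fcot {u : ℂ} (h : Complex.sin (c * u) ≠ 0) :
    DifferentiableAt ℂ (fcot c) u := by
  unfold fcot
  fun_prop (disch := assumption)

theorem tendsto_mul_fcot (hc : c ≠ 0) :
    Tendsto (fun z : ℂ => z * fcot c z) (𝓝[≠] 0) (𝓝 (c : ℂ)⁻¹) := by
  have hc' : (c : ℂ) ≠ 0 := Complex.ofReal_ne_zero.mpr hc
  have hsin : HasDerivAt (fun z : ℂ => Complex.sin (c * z)) c 0 := by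
    simpa using ((hasDerivAt_id (0 : ℂ)).const_mul (c : ℂ)).csin
  have hslope : Tendsto (fun z : ℂ => Complex.sin (c * z) / z) (𝓝[≠] 0) (𝓝 c) := by
    refine (hasDerivAt_iff_tendsto_slope.mp hsin).congr fun z => ?_
    simp [slope_def_field]
  have hnum : Tendsto (fun z : ℂ => Complex.exp (-z) * Complex.cos (c * z)) (𝓝[≠] 0) (𝓝 1) := by
    have : ContinuousAt (fun z : ℂ => Complex.exp (-z) * Complex.cos (c * z)) 0 := by fun_prop
    simpa using this.tendsto.mono_left nhdsWithin_le_nhds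
  have hquot := hnum.div hslope hc'
  rw [one_div] at hquot
  refine hquot.congr' ?_
  filter_upwards [self_mem_nhdsWithin] with z (hz : z ≠ 0)
  rw [Pi.div_apply, fcot]
  field_simp

theorem exists_differentiableOn_eq_fcot_sub_inv (hc : 0 < c) :
    ∃ g : ℂ → ℂ, DifferentiableOn ℂ g (ball 0 (π / c)) ∧
      ∀ u ∈ ball (0 : ℂ) (π / c), u ≠ 0 → g u = fcot c u - ((c : ℂ) * u)⁻¹ := by
  set g₀ : ℂ → ℂ := fun u => fcot c u - ((c : ℂ) * u)⁻¹
  have hc' : (c : ℂ) ≠ 0 := Complex.ofReal_ne_zero.mpr hc.ne'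
  have hdiff : DifferentiableOn ℂ g₀ (ball 0 (π / c) \ {0}) := by
    rintro u ⟨hu, hu0 : u ≠ 0⟩
    exact ((differentiableAt_fcot (sin_mul_ne_zero_of_mem_ball hc hu hu0)).sub
      ((differentiableAt_id.const_mul _).inv (mul_ne_zero hc' hu0))).differentiableWithinAt
  have hlittleO : (fun z => g₀ z - g₀ 0) =o[𝓝[≠] 0] fun z => (z - 0)⁻¹ := by
    refine (Asymptotics.isLittleO_iff_tendsto' ?_).mpr ?_
    · filter_upwards [self_mem_nhdsWithin] with z (hz : z ≠ 0) h
      simp [hz] at h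
    have hlin : Tendsto (fun z : ℂ => z * g₀ 0) (𝓝[≠] 0) (𝓝 0) := by
      simpa using (tendsto_nhdsWithin_of_tendsto_nhds (tendsto_id (x := 𝓝 (0 : ℂ)))).mul_const
        (g₀ 0)
    have hlim := ((tendsto_mul_fcot hc.ne').sub_const (c : ℂ)⁻¹).sub hlin
    rw [sub_self, sub_zero] at hlim
    refine hlim.congr' ?_
    filter_upwards [self_mem_nhdsWithin] with z (hz : z ≠ 0)
    simp only [g₀, sub_zero, div_inv_eq_mul]
    field_simp
  exact ⟨_, Complex.differentiableOn_update_limUnder_of_isLittleO (ball_mem_nhds 0 (by positivity))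
    hdiff hlittleO, fun u _ hu0 => Function.update_of_ne hu0 _ _⟩

theorem exists_hasDerivAt_fcot_sub_inv (hc : 0 < c) :
    ∃ P : ℂ → ℂ, ContinuousAt P 0 ∧
      ∀ u ∈ ball (0 : ℂ) (π / c), u ≠ 0 → HasDerivAt P (fcot c u - ((c : ℂ) * u)⁻¹) u := by
  obtain ⟨g, hg, hg_eq⟩ := exists_differentiableOn_eq_fcot_sub_inv hc
  obtain ⟨P, hP⟩ := hg.isExactOn_ball
  exact ⟨P, (hP 0 (mem_ball_self (by positivity))).continuousAt,
    fun u hu hu0 => hg_eq u hu hu0 ▸ hP u hu⟩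

theorem exists_tendsto_Fc_sub_log (hc : 0 < c) :
    ∃ L : ℂ, Tendsto (fun W : ℂ => Fc c W - (1 / (c : ℂ)) * Complex.log ((c : ℂ) * W))
      (𝓝[{W | 0 < W.re}] 0) (𝓝 L) := by
  obtain ⟨P, hP0, hP⟩ := exists_hasDerivAt_fcot_sub_inv hc
  set U := ball (0 : ℂ) (π / c) ∩ {W | 0 < W.re}
  set b : ℂ := ((π / (2 * c) : ℝ) : ℂ)
  set H : ℂ → ℂ := fun u => P u + (1 / (c : ℂ)) * Complex.log u
  have hb : b ∈ U := by
    have hb_pos : 0 < π / (2 * c) := by positivity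
    refine ⟨?_, show 0 < b.re by rwa [Complex.ofReal_re]⟩
    rw [mem_ball_zero_iff, Complex.norm_real, Real.norm_of_nonneg hb_pos.le]
    exact div_lt_div_of_pos_left pi_pos hc (by linarith)
  have hH : ∀ u ∈ U, HasDerivAt H (fcot c u) u := by
    rintro u ⟨hu, hu_re : 0 < u.re⟩
    have hlog := (Complex.hasDerivAt_log (Or.inl hu_re)).const_mul (1 / (c : ℂ))
    refine ((hP u hu (Complex.ne_zero_of_re_pos hu_re)).add hlog).congr_deriv ?_
    field_simp
    ring
  have hFc : ∀ W ∈ U, Fc c W = H W - H b := fun W hW =>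
    integral_mul_comp_segment_eq_sub ((convex_ball _ _).inter (convex_halfSpace_re_gt 0)) hH
      (fun u ⟨hu, hu_re⟩ => (differentiableAt_fcot (sin_mul_ne_zero_of_mem_ball hc hu
        (Complex.ne_zero_of_re_pos hu_re))).continuousAt.continuousWithinAt) hb hW
  refine ⟨P 0 - (H b + (1 / (c : ℂ)) * Real.log c), ?_⟩
  have hP_lim := (hP0.tendsto.mono_left (nhdsWithin_le_nhds (s := {W : ℂ | 0 < W.re}))).sub_const
    (H b + (1 / (c : ℂ)) * Real.log c)
  refine Tendsto.congr' ?_ hP_lim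
  filter_upwards [inter_mem_nhdsWithin _ (ball_mem_nhds 0 (by positivity : 0 < π / c))]
    with W ⟨hW_re, hW⟩
  rw [hFc W ⟨hW, hW_re⟩, Complex.log_ofReal_mul hc (Complex.ne_zero_of_re_pos hW_re)]
  ring

theorem intervalIntegrable_exp_neg_mul_log_sin (hc : c ≠ 0) (a b : ℝ) :
    IntervalIntegrable (fun u => exp (-u) * log (sin (c * u))) volume a b := by
  have h := (intervalIntegrable_log_sin (a := c * a) (b := c * b)).comp_mul_left (c := c)
  simp only [mul_div_cancel_left₀ _ hc] at h
  exact h.continuousOn_mul (by fun_prop)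

theorem tendsto_integral_exp_neg_mul_log_sin (hc : c ≠ 0) (b : ℝ) :
    Tendsto (fun ε => ∫ u in ε..b, exp (-u) * log (sin (c * u))) (𝓝[>] 0)
      (𝓝 (∫ u in (0 : ℝ)..b, exp (-u) * log (sin (c * u)))) := by
  have hcont : Continuous fun ε => ∫ u in ε..b, exp (-u) * log (sin (c * u)) := by
    simp_rw [intervalIntegral.integral_symm b]
    exact (intervalIntegral.continuous_primitive (intervalIntegrable_exp_neg_mul_log_sin hc) b).neg
  exact (hcont.tendsto 0).mono_left nhdsWithin_le_nhds

theorem fcot_ofReal (c x : ℝ) : fcot c x = ↑(exp (-x) * (cos (c * x) / sin (c * x))) := by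
  simp [fcot]

theorem Fc_ofReal (c x : ℝ) :
    Fc c x = ↑(∫ u in π / (2 * c)..x, exp (-u) * (cos (c * u) / sin (c * u))) := by
  set b := π / (2 * c)
  have hsubst := intervalIntegral.smul_integral_comp_add_mul (a := 0) (b := 1)
    (fun u => exp (-u) * (cos (c * u) / sin (c * u))) (x - b) b
  rw [mul_zero, add_zero, mul_one, add_sub_cancel] at hsubst
  rw [← hsubst, smul_eq_mul, ← intervalIntegral.integral_const_mul, Fc,
    ← intervalIntegral.integral_ofReal]
  congr 1 with t
  rw [segPoint, ← Complex.ofReal_sub, ← Complex.ofReal_mul, ← Complex.ofReal_add, fcot_ofReal,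
    ← Complex.ofReal_mul, mul_comm t]

theorem integral_exp_neg_mul_cot_eq (hc : c ≠ 0) {x y : ℝ}
    (hsin : ∀ u ∈ uIcc x y, sin (c * u) ≠ 0) :
    ∫ u in x..y, exp (-u) * (cos (c * u) / sin (c * u)) =
      (exp (-y) * log (sin (c * y)) - exp (-x) * log (sin (c * x)) +
        ∫ u in x..y, exp (-u) * log (sin (c * u))) / c := by
  have hexp : ∀ u ∈ uIcc x y, HasDerivAt (fun u => exp (-u)) (-exp (-u)) u := fun u _ => by
    simpa using (hasDerivAt_neg u).exp
  have hlog : ∀ u ∈ uIcc x y,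
      HasDerivAt (fun u => log (sin (c * u)) / c) (cos (c * u) / sin (c * u)) u := by
    intro u hu
    have h := (((hasDerivAt_id' u).const_mul c).sin.log (hsin u hu)).div_const c
    refine h.congr_deriv ?_
    field_simp
  have hcot : IntervalIntegrable (fun u => cos (c * u) / sin (c * u)) volume x y :=
    (ContinuousOn.div (by fun_prop) (by fun_prop) hsin).intervalIntegrable
  rw [intervalIntegral.integral_mul_deriv_eq_deriv_mul hexp hlog
    (Continuous.intervalIntegrable (by fun_prop) _ _) hcot]
  simp only [neg_mul, mul_div_assoc', intervalIntegral.integral_neg, intervalIntegral.integral_div]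
  ring

theorem tendsto_Fc_ofReal_sub_log (hc : 0 < c) :
    Tendsto (fun x : ℝ => Fc c x - (1 / (c : ℂ)) * Complex.log ((c : ℂ) * x)) (𝓝[>] 0)
      (𝓝 ↑(-(1 / c) * ∫ u in (0 : ℝ)..π / (2 * c), exp (-u) * log (sin (c * u)))) := by
  set b := π / (2 * c)
  have hcb : c * b = π / 2 := by simp only [b]; field_simp
  have hmul : Tendsto (fun x => c * x) (𝓝[>] 0) (𝓝[>] 0) := by
    simpa using (continuous_const_mul c).continuousWithinAt.tendsto_nhdsWithin
      (fun x (hx : x ∈ Ioi 0) => show c * x ∈ Ioi 0 from mul_pos hc hx) (x := 0)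
  have hboundary :
      Tendsto (fun x => exp (-x) * log (sin (c * x)) - log (c * x)) (𝓝[>] 0) (𝓝 0) := by
    refine ((tendsto_exp_mul_log_sin_sub_log (-c⁻¹)).comp hmul).congr fun x => ?_
    simp only [Function.comp_apply]
    field_simp
  have hlim := (hboundary.sub (tendsto_integral_exp_neg_mul_log_sin hc.ne' b)).const_mul (1 / c)
  rw [zero_sub, mul_neg, ← neg_mul] at hlim
  refine ((Complex.continuous_ofReal.tendsto _).comp hlim).congr' ?_
  filter_upwards [Ioo_mem_nhdsGT (by positivity : 0 < b)] with x ⟨hx0, hxb⟩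
  have hsin : ∀ u ∈ uIcc b x, sin (c * u) ≠ 0 := by
    intro u hu
    rw [uIcc_of_ge hxb.le] at hu
    refine (sin_pos_of_pos_of_lt_pi (by nlinarith [hu.1]) ?_).ne'
    nlinarith [hu.2, pi_pos]
  rw [Function.comp_apply, Fc_ofReal, integral_exp_neg_mul_cot_eq hc.ne' hsin, hcb, sin_pi_div_two,
    log_one, intervalIntegral.integral_symm x b, ← Complex.ofReal_mul,
    ← Complex.ofReal_log (by positivity)]
  push_cast
  ring

end

/-- As `W → 0` in `ℛ₀`, `F_c(W) - (1/c) Log(cW)` converges to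
`-(1/c) ∫₀^{π/(2c)} e^{-u} ln sin(cu) du`, the latter being a convergent improper
integral. -/
theorem Fc_asymptotics_at_zero (c : ℝ) (hc : 0 < c) :
    ∃ I : ℝ,
      Tendsto (fun ε : ℝ =>
          ∫ u in ε..(π / (2 * c)), Real.exp (-u) * Real.log (Real.sin (c * u)))
        (𝓝[>] (0 : ℝ)) (𝓝 I) ∧
      Tendsto (fun W : ℂ => Fc c W - (1 / (c : ℂ)) * Complex.log ((c : ℂ) * W))
        (𝓝[regionR0 c] (0 : ℂ)) (𝓝 (-(1 / (c : ℂ)) * (I : ℂ))) := by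
  obtain ⟨L, hL⟩ := exists_tendsto_Fc_sub_log hc
  have hL_eq :=
    tendsto_nhds_unique (hL.comp tendsto_ofReal_nhdsGT_zero) (tendsto_Fc_ofReal_sub_log hc)
  refine ⟨_, tendsto_integral_exp_neg_mul_log_sin hc.ne' _, ?_⟩
  have hregion := hL.mono_left (nhdsWithin_mono _ fun W (hW : W ∈ regionR0 c) => hW.1)
  rw [hL_eq] at hregion
  convert hregion using 2
  push_cast
  ring
end
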